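/- arXiv:math/9910162 — 4 statements merged into one kernel-verified Lean document; each statement's English description precedes it below -/
import Mathlib

section
/- For any torsion-free abelian group G, G contains an isomorphic copy of ℚ if and only if there exists x ∈ G with x ≠ 0 such that for every n ∈ ℕ, n! divides x in G (i.e., for every n there exists y ∈ G with (n! : ℤ) • y = x). -/
/-!
A torsion-free group `G` embeds in its divisible hull, a `ℚ`-vector space. If `x ≠ 0` is divisible
in `G` by every `n!`, then `q • x ∈ G` for every `q : ℚ`, because `q.den` divides `q.den!`;
so the line `ℚ ∙ x` lies in `G` and is a copy of `ℚ`. Conversely, the image of `1` under an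
embedding of `ℚ` is divisible by every nonzero integer.
-/

/-- A group `G` is torsion-free: `n • x ≠ 0` for every `x ≠ 0` and integer `n > 0`. -/
def IsTorsionFreeGroup (G : Type*) [AddCommGroup G] : Prop :=
  ∀ x : G, x ≠ 0 → ∀ n : ℤ, 0 < n → n • x ≠ 0

/-- `G` contains a subgroup isomorphic to `A`. -/
def ContainsCopy (A G : Type*) [AddCommGroup A] [AddCommGroup G] : Prop :=
  ∃ f : A →+ G, Function.Injective f

theorem IsTorsionFreeGroup.isAddTorsionFree {G : Type*} [AddCommGroup G]
    (hG : IsTorsionFreeGroup G) : IsAddTorsionFree G where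
  nsmul_right_injective n hn a b hab := by
    by_contra hne
    refine hG (a - b) (sub_ne_zero.2 hne) n (by positivity) ?_
    rw [natCast_zsmul, nsmul_sub, sub_eq_zero]
    exact hab

theorem AddMonoidHom.zsmul_map_inv {G : Type*} [AddCommGroup G] (f : ℚ →+ G) {m : ℤ}
    (hm : m ≠ 0) : m • f (m : ℚ)⁻¹ = f 1 := by
  rw [← map_zsmul, zsmul_eq_mul, mul_inv_cancel₀ (Int.cast_ne_zero.2 hm)]

theorem Rat.mul_factorial_den_eq_intCast (q : ℚ) :
    q * (q.den.factorial : ℚ) = ((q.num * (q.den - 1).factorial : ℤ) : ℚ) := by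
  rw [← Nat.mul_factorial_pred q.den_ne_zero]
  push_cast
  rw [← mul_assoc, Rat.mul_den_eq_num]

theorem rat_smul_mem_range_of_forall_factorial_dvd {G V : Type*} [AddCommGroup G]
    [AddCommGroup V] [Module ℚ V] (ι : G →+ V) {x : G}
    (hx : ∀ n : ℕ, ∃ y : G, (n.factorial : ℤ) • y = x) (q : ℚ) : q • ι x ∈ ι.range := by
  obtain ⟨y, rfl⟩ := hx q.den
  refine ⟨(q.num * (q.den - 1).factorial) • y, ?_⟩
  rw [map_zsmul, map_zsmul, natCast_zsmul, ← Nat.cast_smul_eq_nsmul ℚ, smul_smul,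
    Rat.mul_factorial_den_eq_intCast, Int.cast_smul_eq_zsmul]

theorem containsCopy_rat_of_forall_rat_smul_mem_range {G V : Type*} [AddCommGroup G]
    [AddCommGroup V] [Module ℚ V] (ι : G →+ V) (hι : Function.Injective ι) {v : V}
    (hv : v ≠ 0) (h : ∀ q : ℚ, q • v ∈ ι.range) : ContainsCopy ℚ G := by
  let line : ℚ →+ ι.range :=
    (LinearMap.toSpanSingleton ℚ V v).toAddMonoidHom.codRestrict ι.range h
  refine ⟨(AddMonoidHom.ofInjective hι).symm.toAddMonoidHom.comp line, ?_⟩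
  refine (AddMonoidHom.ofInjective hι).symm.injective.comp fun p q hpq => ?_
  exact smul_left_injective ℚ hv (congrArg Subtype.val hpq)

/-- A torsion-free group contains a copy of `ℚ` iff it has a nonzero element
divisible by `n!` for every `n`. -/
theorem containsCopy_rat_iff (G : Type*) [AddCommGroup G]
    (hG : IsTorsionFreeGroup G) :
    ContainsCopy ℚ G ↔
      ∃ x : G, x ≠ 0 ∧ ∀ n : ℕ, ∃ y : G, (n.factorial : ℤ) • y = x := by
  constructor
  · rintro ⟨f, hf⟩
    refine ⟨f 1, (map_ne_zero_iff f hf).2 one_ne_zero, fun n => ⟨f (n.factorial : ℚ)⁻¹, ?_⟩⟩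
    exact_mod_cast f.zsmul_map_inv (Int.natCast_ne_zero.2 n.factorial_ne_zero)
  · rintro ⟨x, hx, hdiv⟩
    have := hG.isAddTorsionFree
    let ι := DivisibleHull.coeAddMonoidHom G
    have hι : Function.Injective ι := DivisibleHull.coe_injective
    exact containsCopy_rat_of_forall_rat_smul_mem_range ι hι ((map_ne_zero_iff ι hι).2 hx)
      (rat_smul_mem_range_of_forall_factorial_dvd ι hdiv)
end

section
/- Let G be an abelian group and h : (ℕ → ℤ) →+ G an injective additive group homomorphism from the Baer-Specker group into G. Then for every a : ℕ → ℤ with n! ∣ a(n) for all n (i.e., a ∈ S*), and for every n ∈ ℕ, n! divides (h(a) - Σ_{l<n} a(l) • h(e_l)) in G. -/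
/-- The standard `n`-th unit vector of the Baer-Specker group `ℕ → ℤ`. -/
def specker_e (n : ℕ) : ℕ → ℤ := Pi.single n 1

/-- `S* = {a : ℕ → ℤ | ∀ n, n! ∣ a n}`. -/
def Sstar : Set (ℕ → ℤ) := {a | ∀ n : ℕ, (n.factorial : ℤ) ∣ a n}

/-- If `h` embeds the Baer-Specker group into `G`, then for every `a ∈ S*` and every `n`,
`n!` divides `h a - Σ_{l<n} a l • h (e_l)` in `G`. -/
theorem phi_of_embedding (G : Type*) [AddCommGroup G]
    (h : (ℕ → ℤ) →+ G) (hinj : Function.Injective h)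
    (a : ℕ → ℤ) (ha : a ∈ Sstar) (n : ℕ) :
    ∃ z : G, (n.factorial : ℤ) • z = h a - ∑ l ∈ Finset.range n, a l • h (specker_e l) := by
  set b : ℕ → ℤ := fun k => if k < n then 0 else a k / n.factorial with hb
  refine ⟨h b, ?_⟩
  have key : (n.factorial : ℤ) • b = a - ∑ l ∈ Finset.range n, a l • specker_e l := by
    funext k
    simp only [Pi.smul_apply, Pi.sub_apply, Finset.sum_apply, specker_e, Pi.smul_apply,
      smul_eq_mul, hb]
    by_cases hk : k < n
    · rw [Finset.sum_eq_single k]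
      · simp [hk, Pi.single_apply]
      · intro l _ hl
        simp [Pi.single_apply, hl]
      · intro hkk
        exact absurd (Finset.mem_range.2 hk) hkk
    · have hsum : ∑ l ∈ Finset.range n, a l * specker_e l k = 0 := by
        apply Finset.sum_eq_zero
        intro l hl
        have : l ≠ k := by
          intro he; exact hk (he ▸ Finset.mem_range.1 hl)
        simp [specker_e, Pi.single_apply, this]
      have hdvd : (n.factorial : ℤ) ∣ a k := by
        refine dvd_trans ?_ (ha k)
        exact_mod_cast Nat.factorial_dvd_factorial (Nat.le_of_not_lt hk)
      simp only [specker_e] at hsum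
      simp only [if_neg hk, hsum, sub_zero]
      rw [Int.mul_ediv_cancel' hdvd]
  calc (n.factorial : ℤ) • h b = h ((n.factorial : ℤ) • b) := (map_zsmul h _ _).symm
    _ = h a - ∑ l ∈ Finset.range n, a l • h (specker_e l) := by
        rw [key, map_sub, map_sum]
        exact congrArg₂ _ rfl (Finset.sum_congr rfl fun l _ => map_zsmul h _ _)
end

section
/- Let p be a prime, and suppose G is a torsion-free abelian group containing no isomorphic copy of ℚ. Then for every g ∈ G and every t ∈ ℤ_[p], there is at most one y ∈ G satisfying ψ_{p,t}(y, g), i.e., at most one y such that: for every n ∈ ℕ, p^n divides (y - (t.appr n) • g) in G, and for every integer q coprime to p, q divides y in G and q divides g in G. -/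
/-- The formula `ψ_{p,t}(y, x)`: for every `n`, `p^n` divides `y - (t.appr n) • x` in `G`,
and every integer `q` coprime to `p` divides both `y` and `x` in `G`. -/
def PsiFormula {G : Type*} [AddCommGroup G] (p : ℕ) [Fact p.Prime]
    (t : ℤ_[p]) (y x : G) : Prop :=
  (∀ n : ℕ, ∃ z : G, ((p : ℤ) ^ n) • z = y - (t.appr n : ℤ) • x) ∧
  (∀ q : ℤ, Int.gcd q (p : ℤ) = 1 →
    (∃ z : G, q • z = y) ∧ (∃ z : G, q • z = x))


section RatSMulOfDivisible

variable {G : Type*} [AddCommGroup G] {d : G} (hdiv : ∀ n : ℤ, 0 < n → ∃ z : G, n • z = d)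

/-- `r • d`, computed as `r.num • (d / r.den)` with a chosen `r.den`-th part of `d`. -/
noncomputable def ratSMulOfDivisible (r : ℚ) : G :=
  r.num • (hdiv r.den (Int.natCast_pos.2 r.den_pos)).choose

theorem den_smul_ratSMulOfDivisible (r : ℚ) :
    (r.den : ℤ) • ratSMulOfDivisible hdiv r = r.num • d := by
  rw [ratSMulOfDivisible, smul_comm, (hdiv r.den (Int.natCast_pos.2 r.den_pos)).choose_spec]

variable [IsAddTorsionFree G]

theorem smul_ratSMulOfDivisible {r : ℚ} {m n : ℤ} (h : r * n = m) :
    n • ratSMulOfDivisible hdiv r = m • d := by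
  have hden : (r.den : ℤ) ≠ 0 := by exact_mod_cast r.den_nz
  have hcross : n * r.num = m * r.den := by
    have : ((n * r.num : ℤ) : ℚ) = ((m * r.den : ℤ) : ℚ) := by
      push_cast
      rw [← Rat.mul_den_eq_num, ← h]
      ring
    exact_mod_cast this
  apply zsmul_right_injective hden
  calc (r.den : ℤ) • n • ratSMulOfDivisible hdiv r
      = (n * r.num) • d := by rw [smul_comm, den_smul_ratSMulOfDivisible, mul_smul]
    _ = (r.den : ℤ) • m • d := by rw [hcross, mul_comm, mul_smul]

theorem ratSMulOfDivisible_add (a b : ℚ) :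
    ratSMulOfDivisible hdiv (a + b) = ratSMulOfDivisible hdiv a + ratSMulOfDivisible hdiv b := by
  have hN : (a.den * b.den : ℤ) ≠ 0 := by positivity
  apply zsmul_right_injective hN
  have ha : a * (a.den * b.den : ℤ) = (a.num * b.den : ℤ) := by
    push_cast
    rw [← Rat.mul_den_eq_num]
    ring
  have hb : b * (a.den * b.den : ℤ) = (b.num * a.den : ℤ) := by
    push_cast
    rw [← Rat.mul_den_eq_num]
    ring
  have hab : (a + b) * (a.den * b.den : ℤ) = (a.num * b.den + b.num * a.den : ℤ) := by
    push_cast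
    rw [← Rat.mul_den_eq_num a, ← Rat.mul_den_eq_num b]
    ring
  simp only [smul_add]
  rw [smul_ratSMulOfDivisible hdiv ha, smul_ratSMulOfDivisible hdiv hb,
    smul_ratSMulOfDivisible hdiv hab, add_smul]

/-- `r • d`, computed as `r.num • (d / r.den)` with a chosen `r.den`-th part of `d`. -/
noncomputable def ratSMulOfDivisibleHom : ℚ →+ G :=
  AddMonoidHom.mk' (ratSMulOfDivisible hdiv) (ratSMulOfDivisible_add hdiv)

theorem ratSMulOfDivisibleHom_injective (hd : d ≠ 0) :
    Function.Injective (ratSMulOfDivisibleHom hdiv) := by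
  refine (injective_iff_map_eq_zero _).2 fun r hr => ?_
  have hnum : r.num • d = 0 := by
    rw [← den_smul_ratSMulOfDivisible hdiv, show ratSMulOfDivisible hdiv r = 0 from hr,
      smul_zero]
  exact Rat.num_eq_zero.1 ((IsAddTorsionFree.zsmul_eq_zero_iff_left hd).1 hnum)

end RatSMulOfDivisible

theorem containsCopy_rat_of_forall_dvd {G : Type*} [AddCommGroup G] [IsAddTorsionFree G] {d : G}
    (hdiv : ∀ n : ℤ, 0 < n → ∃ z : G, n • z = d) (hd : d ≠ 0) : ContainsCopy ℚ G :=
  ⟨ratSMulOfDivisibleHom hdiv, ratSMulOfDivisibleHom_injective hdiv hd⟩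

theorem exists_mul_smul_eq_of_isCoprime {G : Type*} [AddCommGroup G] {a b : ℤ}
    (hab : IsCoprime a b) {x : G} (ha : ∃ z, a • z = x) (hb : ∃ z, b • z = x) :
    ∃ z, (a * b) • z = x := by
  obtain ⟨u, v, huv⟩ := hab
  obtain ⟨z₁, hz₁⟩ := ha
  obtain ⟨z₂, hz₂⟩ := hb
  refine ⟨v • z₁ + u • z₂, ?_⟩
  calc (a * b) • (v • z₁ + u • z₂)
      = (v * b) • (a • z₁) + (u * a) • (b • z₂) := by module
    _ = x := by rw [hz₁, hz₂, ← add_smul, add_comm, huv, one_smul]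

theorem exists_smul_eq_of_forall_primePow_of_forall_coprime {G : Type*} [AddCommGroup G]
    {p : ℕ} (hp : p.Prime) {x : G} (hpow : ∀ k : ℕ, ∃ z, ((p : ℤ) ^ k) • z = x)
    (hcop : ∀ q : ℤ, Int.gcd q p = 1 → ∃ z, q • z = x) {n : ℤ} (hn : 0 < n) :
    ∃ z, n • z = x := by
  lift n to ℕ using hn.le
  obtain ⟨k, m, hpm, rfl⟩ :=
    Nat.exists_eq_pow_mul_and_not_dvd (by exact_mod_cast hn.ne') p hp.ne_one
  have hmp : Nat.Coprime m p := ((Nat.Prime.coprime_iff_not_dvd hp).2 hpm).symm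
  have hpow_m : IsCoprime ((p : ℤ) ^ k) m := by
    exact_mod_cast Nat.isCoprime_iff_coprime.2 (hmp.symm.pow_left k)
  push_cast
  exact exists_mul_smul_eq_of_isCoprime hpow_m (hpow k) (hcop m (by simpa using hmp))

theorem PsiFormula.exists_smul_eq_sub {p : ℕ} [Fact p.Prime] {G : Type*} [AddCommGroup G]
    {t : ℤ_[p]} {y₁ y₂ x : G} (h₁ : PsiFormula p t y₁ x) (h₂ : PsiFormula p t y₂ x)
    {n : ℤ} (hn : 0 < n) : ∃ z, n • z = y₁ - y₂ := by
  refine exists_smul_eq_of_forall_primePow_of_forall_coprime (Fact.out : p.Prime) (fun k => ?_)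
    (fun q hq => ?_) hn
  · obtain ⟨z₁, hz₁⟩ := h₁.1 k
    obtain ⟨z₂, hz₂⟩ := h₂.1 k
    exact ⟨z₁ - z₂, by rw [smul_sub, hz₁, hz₂, sub_sub_sub_cancel_right]⟩
  · obtain ⟨z₁, hz₁⟩ := (h₁.2 q hq).1
    obtain ⟨z₂, hz₂⟩ := (h₂.2 q hq).1
    exact ⟨z₁ - z₂, by rw [smul_sub, hz₁, hz₂]⟩

/-- In a torsion-free group with no copy of `ℚ`, for each `g` and `t ∈ ℤ_[p]`
there is at most one `y` with `ψ_{p,t}(y, g)`. -/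
theorem psi_unique (p : ℕ) [Fact p.Prime] (G : Type*) [AddCommGroup G]
    (hG : IsTorsionFreeGroup G) (hQ : ¬ ContainsCopy ℚ G)
    (g : G) (t : ℤ_[p]) :
    ∀ y₁ y₂ : G, PsiFormula p t y₁ g → PsiFormula p t y₂ g → y₁ = y₂ := by
  intro y₁ y₂ h₁ h₂
  have := hG.isAddTorsionFree
  by_contra hne
  exact hQ (containsCopy_rat_of_forall_dvd (fun n hn => h₁.exists_smul_eq_sub h₂ hn)
    (sub_ne_zero.2 hne))
end

section
/- If D is a non-principal ultrafilter over ℕ, then the ultrapower ℤ^ω/D of the integers (the group of germs of functions ℕ → ℤ modulo D) is not slender. In fact, it contains a nonzero element divisible by every positive integer, hence contains an isomorphic copy of ℚ. -/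
open Filter

/-- `G` is slender: torsion-free, and every homomorphism from the Baer-Specker group
kills all but finitely many unit vectors. -/
def IsSlender (G : Type*) [AddCommGroup G] : Prop :=
  IsTorsionFreeGroup G ∧
    ∀ h : (ℕ → ℤ) →+ G, {n : ℕ | h (specker_e n) ≠ 0}.Finite

/-- `q * k` is an integer when `q.den` divides `k`. -/
lemma rat_mul_int (q : ℚ) (k : ℤ) (h : (q.den : ℤ) ∣ k) :
    q * (k : ℚ) = ((q.num * (k / q.den) : ℤ) : ℚ) := by
  obtain ⟨t, rfl⟩ := h
  push_cast
  rw [Int.mul_ediv_cancel_left _ (by exact_mod_cast q.den_ne_zero)]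
  rw [show q * (↑q.den * ↑t) = q * q.den * t from by ring, Rat.mul_den_eq_num]

lemma den_dvd_factorial (q : ℚ) {n : ℕ} (h : q.den ≤ n) :
    (q.den : ℤ) ∣ (n.factorial : ℤ) := by
  exact_mod_cast Nat.dvd_factorial q.pos h

/-- The ultrapower of `ℤ` by a non-principal ultrafilter on `ℕ` is not slender:
it has a nonzero element divisible by every positive integer, hence contains a copy of `ℚ`. -/
theorem ultrapower_not_slender (D : Ultrafilter ℕ) (hD : ∀ a : ℕ, D ≠ pure a) :
    ¬ IsSlender (Filter.Germ (D : Filter ℕ) ℤ) ∧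
    (∃ x : Filter.Germ (D : Filter ℕ) ℤ, x ≠ 0 ∧
      ∀ m : ℤ, 0 < m → ∃ y : Filter.Germ (D : Filter ℕ) ℤ, m • y = x) ∧
    ContainsCopy ℚ (Filter.Germ (D : Filter ℕ) ℤ) := by
  have hatTop : (D : Filter ℕ) ≤ Filter.atTop := by
    rw [← Nat.cofinite_eq_atTop]
    rcases D.le_cofinite_or_eq_pure with h | ⟨a, ha⟩
    · exact h
    · exact absurd ha (hD a)
  have hzero : ∀ f : ℕ → ℤ, ((f : Filter.Germ (D : Filter ℕ) ℤ) = 0 ↔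
      f =ᶠ[(D : Filter ℕ)] (fun _ => (0 : ℤ))) := by
    intro f
    have h0 : (0 : Filter.Germ (D : Filter ℕ) ℤ) =
        (((fun _ => (0:ℤ)) : ℕ → ℤ) : Filter.Germ (D : Filter ℕ) ℤ) := rfl
    rw [h0, Filter.Germ.coe_eq]
  refine ⟨?_, ?_, ?_⟩
  · -- not slender: partial-sums homomorphism
    rintro ⟨-, hfin⟩
    set S : (ℕ → ℤ) → ℕ → ℤ := fun f k => ∑ i ∈ Finset.range (k+1), f i with hS
    have hadd : ∀ f g : ℕ → ℤ, ((S (f+g) : Filter.Germ (D : Filter ℕ) ℤ)) = ↑(S f) + ↑(S g) := by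
      intro f g
      rw [← Filter.Germ.coe_add, Filter.Germ.coe_eq]
      filter_upwards with k
      simp [hS, Finset.sum_add_distrib]
    set h : (ℕ → ℤ) →+ Filter.Germ (D : Filter ℕ) ℤ :=
      AddMonoidHom.mk' (fun f => ((S f) : Filter.Germ (D : Filter ℕ) ℤ)) hadd with hh
    have key : ∀ n, h (specker_e n) ≠ 0 := by
      intro n h0
      rw [hh] at h0
      simp only [AddMonoidHom.mk'_apply, hzero] at h0
      have h1 : (S (specker_e n)) =ᶠ[(D : Filter ℕ)] (fun _ => (1 : ℤ)) := by
        apply hatTop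
        filter_upwards [Filter.eventually_ge_atTop n] with k hk
        simp only [hS, specker_e]
        rw [Finset.sum_eq_single n]
        · simp
        · intro b _ hb; simp [Pi.single_apply, hb]
        · intro hn; exact absurd (Finset.mem_range.2 (Nat.lt_succ_of_le hk)) hn
      obtain ⟨k, hk1, hk2⟩ := (h0.and h1).exists
      rw [hk1] at hk2
      exact one_ne_zero hk2.symm
    have heq : {n : ℕ | h (specker_e n) ≠ 0} = Set.univ := by
      ext n; simp [key n]
    exact Set.infinite_univ (heq ▸ hfin h)
  · -- divisible element: germ of factorials
    refine ⟨((fun n : ℕ => (n.factorial : ℤ)) : Filter.Germ (D : Filter ℕ) ℤ), ?_, ?_⟩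
    · intro h0
      rw [hzero] at h0
      obtain ⟨n, hn⟩ := h0.exists
      simp only at hn
      exact (Nat.factorial_pos n).ne' (by exact_mod_cast hn)
    · intro m hm
      refine ⟨((fun n : ℕ => (n.factorial : ℤ) / m) : Filter.Germ (D : Filter ℕ) ℤ), ?_⟩
      have hsmul : (m • (((fun n : ℕ => (n.factorial : ℤ) / m) : ℕ → ℤ) :
            Filter.Germ (D : Filter ℕ) ℤ)) =
          (((fun n : ℕ => m * ((n.factorial : ℤ) / m)) : ℕ → ℤ) :
            Filter.Germ (D : Filter ℕ) ℤ) := rfl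
      rw [hsmul, Filter.Germ.coe_eq]
      apply hatTop
      filter_upwards [Filter.eventually_ge_atTop m.toNat] with n hn
      have hdvd : m ∣ (n.factorial : ℤ) := by
        have h1 : m.toNat ∣ n.factorial := Nat.dvd_factorial (by omega) hn
        have h2 := Int.ofNat_dvd.2 h1
        rwa [Int.toNat_of_nonneg hm.le] at h2
      exact Int.mul_ediv_cancel' hdvd
  · -- copy of ℚ
    set F : ℚ → ℕ → ℤ := fun q n => q.num * ((n.factorial : ℤ) / q.den) with hF
    have hFval : ∀ (q : ℚ) (n : ℕ), q.den ≤ n → ((F q n : ℤ) : ℚ) = q * (n.factorial : ℤ) := by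
      intro q n hn
      rw [hF, ← rat_mul_int q _ (den_dvd_factorial q hn)]
    have hadd : ∀ p q : ℚ, ((F (p+q) : Filter.Germ (D : Filter ℕ) ℤ)) = ↑(F p) + ↑(F q) := by
      intro p q
      rw [← Filter.Germ.coe_add, Filter.Germ.coe_eq]
      apply hatTop
      filter_upwards [Filter.eventually_ge_atTop p.den, Filter.eventually_ge_atTop q.den,
        Filter.eventually_ge_atTop (p+q).den] with n hp hq hpq
      have : ((F (p+q) n : ℤ) : ℚ) = ((F p n + F q n : ℤ) : ℚ) := by
        push_cast
        rw [show ((F (p+q) n : ℤ) : ℚ) = (p+q) * (n.factorial : ℤ) from hFval _ _ hpq,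
          show ((F p n : ℤ) : ℚ) = p * (n.factorial : ℤ) from hFval _ _ hp,
          show ((F q n : ℤ) : ℚ) = q * (n.factorial : ℤ) from hFval _ _ hq]
        ring
      exact_mod_cast this
    refine ⟨AddMonoidHom.mk' (fun q => ((F q) : Filter.Germ (D : Filter ℕ) ℤ)) hadd, ?_⟩
    rw [injective_iff_map_eq_zero]
    intro q h0
    by_contra hq
    simp only [AddMonoidHom.mk'_apply, hzero] at h0
    have hne : ∀ᶠ n in (D : Filter ℕ), F q n ≠ 0 := by
      apply hatTop
      filter_upwards [Filter.eventually_ge_atTop q.den] with n hn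
      have hnum : q.num ≠ 0 := Rat.num_ne_zero.2 hq
      have hdvd := den_dvd_factorial q hn
      have hpos : (n.factorial : ℤ) / q.den ≠ 0 := by
        intro h
        have h2 := Int.ediv_mul_cancel hdvd
        rw [h, zero_mul] at h2
        exact (Nat.factorial_pos n).ne' (by exact_mod_cast h2.symm)
      exact mul_ne_zero hnum hpos
    obtain ⟨n, hn1, hn2⟩ := (h0.and hne).exists
    exact hn2 hn1
end
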